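/- Let t be a closed λ-term, and let p, q₁, q₂, r be positions such that ⟨t, pq₁r⟩ and ⟨t, pq₂r⟩ are valid term nodes. If the term nodes ⟨t, pq₁⟩ and ⟨t, pq₂⟩ are bisimilar and q₁ is locally closed in t[p], then (⟨t[p]⟩q₁)[r] = (⟨t[p]⟩q₂)[r]. -/

import Mathlib

/-!
Bisimilarity propagates along every path below two bisimilar nodes, so the subterms at
`p ++ q₁ ++ r` and `p ++ q₂ ++ r` have the same shape and only variables need comparing. A
variable's ↑-transition leads to its binder, and two bisimilar positions on a common branch of a
finite term coincide (otherwise the bisimulation would unfold an infinite path). Hence a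
variable bound inside `r` is bound at the same relative place on both sides, while a variable
free in `t[p ++ q₁]` is, by local closedness, bound above `p` and so by the same λ on both
sides. In both cases the lifts agree.
-/

namespace HashAlpha

/-- g-terms: λ-terms with de Bruijn indices, extended with global variables `gvar t`. -/
inductive GTerm : Type
  | var : ℕ → GTerm
  | app : GTerm → GTerm → GTerm
  | lam : GTerm → GTerm
  | gvar : GTerm → GTerm
  deriving DecidableEq

/-- A g-term is a pure λ-term if it contains no global variables. -/
def GTerm.IsPure : GTerm → Prop
  | .var _ => True
  | .app a b => a.IsPure ∧ b.IsPure
  | .lam a => a.IsPure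
  | .gvar _ => False

/-- Directions for term positions: ↓, ↙, ↘. -/
inductive Dir : Type
  | down | left | right
  deriving DecidableEq

/-- A term position is a word over {↓, ↙, ↘}. -/
abbrev Pos := List Dir

/-- `|p|_λ`: the number of ↓'s in a position. -/
def lamDepth (p : Pos) : ℕ := p.count Dir.down

/-- Term indexing `t[p]` (partial; does not descend into global variables). -/
def GTerm.index : GTerm → Pos → Option GTerm
  | t, [] => some t
  | .app a _, .left :: p => a.index p
  | .app _ b, .right :: p => b.index p
  | .lam a, .down :: p => a.index p
  | _, _ => none

/-- `valid(t)`: the set of positions where `t[p]` is defined. -/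
def Valid (t : GTerm) : Set Pos := {p | (t.index p).isSome}

/-- `vars(t)`: positions of variables. -/
def Vars (t : GTerm) : Set Pos := {p | ∃ i, t.index p = some (.var i)}

/-- `free(t)`: positions of free variables. -/
def Free (t : GTerm) : Set Pos :=
  {p | ∃ i, t.index p = some (.var i) ∧ lamDepth p ≤ i}

/-- A term is closed if it has no free variables. -/
def Closed (t : GTerm) : Prop := Free t = ∅

/-- `p` is locally closed in `t`: every free variable of `t[p]` is also free in `t`. -/
def LocallyClosed (t : GTerm) (p : Pos) : Prop :=
  p ∈ Valid t ∧ ∀ u, t.index p = some u → ∀ q ∈ Free u, p ++ q ∈ Free t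

/-- Subtract `d0` from every free variable (`d` is the current binder depth). -/
def declift (d0 : ℕ) : GTerm → ℕ → GTerm
  | .var j, d => if d ≤ j then .var (j - d0) else .var j
  | .app a b, d => .app (declift d0 a d) (declift d0 b d)
  | .lam a, d => .lam (declift d0 a (d + 1))
  | .gvar a, _ => .gvar a

/-- The lift `⟨t⟩p`: equal to `t[p]` except every free variable of `t[p]` is
decremented by `|p|_λ`. -/
def liftAt (t : GTerm) (p : Pos) : Option GTerm :=
  (t.index p).map (fun u => declift (lamDepth p) u 0)

/-- Transition labels: ↓, ↙, ↘ and ↑. -/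
inductive Lab : Type
  | down | left | right | up
  deriving DecidableEq

def Lab.ofDir : Dir → Lab
  | .down => .down
  | .left => .left
  | .right => .right

/-- Transitions between term nodes. -/
inductive Trans : GTerm × Pos → Lab → GTerm × Pos → Prop
  | dir (t : GTerm) (p : Pos) (x : Dir) :
      (p ++ [x]) ∈ Valid t → Trans (t, p) (Lab.ofDir x) (t, p ++ [x])
  | up (t : GTerm) (q r : Pos) :
      t.index (q ++ Dir.down :: r) = some (.var (lamDepth r)) →
      Trans (t, q ++ Dir.down :: r) Lab.up (t, q)

/-- `R` is a bisimulation. -/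
def IsBisim (R : GTerm × Pos → GTerm × Pos → Prop) : Prop :=
  ∀ n₁ n₂, R n₁ n₂ → ∀ x : Lab,
    (∀ n₁', Trans n₁ x n₁' → ∃ n₂', Trans n₂ x n₂' ∧ R n₁' n₂') ∧
    (∀ n₂', Trans n₂ x n₂' → ∃ n₁', Trans n₁ x n₁' ∧ R n₁' n₂')

/-- Two nodes are bisimilar when some bisimulation relates them. -/
def Bisim (n₁ n₂ : GTerm × Pos) : Prop := ∃ R, IsBisim R ∧ R n₁ n₂

/-- `(t, p)` is a term node: `t` is closed and `p ∈ valid(t)`. -/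
def IsNode (t : GTerm) (p : Pos) : Prop := Closed t ∧ p ∈ Valid t

/-- A single fork between term nodes (let-abs rule or closed rule). -/
def SingleFork (n₁ n₂ : GTerm × Pos) : Prop :=
  (∃ t p q₁ q₂ r u,
      n₁ = (t, p ++ q₁ ++ r) ∧ n₂ = (t, p ++ q₂ ++ r) ∧
      IsNode t (p ++ q₁ ++ r) ∧ IsNode t (p ++ q₂ ++ r) ∧
      t.index p = some u ∧ LocallyClosed u q₁ ∧ liftAt u q₁ = liftAt u q₂) ∨
  (∃ t₁ t₂ p₁ p₂ r u,
      n₁ = (t₁, p₁ ++ r) ∧ n₂ = (t₂, p₂ ++ r) ∧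
      IsNode t₁ (p₁ ++ r) ∧ IsNode t₂ (p₂ ++ r) ∧
      t₁.index p₁ = some u ∧ Closed u ∧ t₂.index p₂ = some u)

/-- Fork equivalence: the transitive closure of single forks. -/
def ForkEquiv : GTerm × Pos → GTerm × Pos → Prop := Relation.TransGen SingleFork

/-- Shift free variables ≥ `c` up by `d`. -/
def shiftAux (c d : ℕ) : GTerm → GTerm
  | .var j => if j < c then .var j else .var (j + d)
  | .app a b => .app (shiftAux c d a) (shiftAux c d b)
  | .lam a => .lam (shiftAux (c + 1) d a)
  | .gvar a => .gvar a

/-- Capture-avoiding substitution of free variable `i` by `u` (at current depth `d`). -/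
def substAux (i : ℕ) (u : GTerm) : ℕ → GTerm → GTerm
  | d, .var j => if j = i + d then shiftAux 0 d u else .var j
  | d, .app a b => .app (substAux i u d a) (substAux i u d b)
  | d, .lam a => .lam (substAux i u (d + 1) a)
  | _, .gvar a => .gvar a

/-- `t[i := u]`: capture-avoiding substitution of variable `i` by `u` in `t`. -/
def subst (i : ℕ) (u : GTerm) (t : GTerm) : GTerm := substAux i u 0 t

/-- Simultaneous capture-avoiding substitution of variable `i` by `σᵢ`
(at current depth `d`). -/
def msubstAux (σ : List GTerm) : ℕ → GTerm → GTerm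
  | d, .var j =>
      if j < d then .var j else shiftAux 0 d (σ.getD (j - d) (.var (j - d)))
  | d, .app a b => .app (msubstAux σ d a) (msubstAux σ d b)
  | d, .lam a => .lam (msubstAux σ (d + 1) a)
  | _, .gvar a => .gvar a

/-- `tσ`: simultaneous substitution of each variable `i` by the `i`-th element of `σ`. -/
def msubst (σ : List GTerm) (t : GTerm) : GTerm := msubstAux σ 0 t

/-- Term size (the term summary `|t|`); global variables count as leaves. -/
def gsize : GTerm → ℕ
  | .var _ => 1
  | .gvar _ => 1
  | .app a b => gsize a + gsize b + 1
  | .lam a => gsize a + 1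

theorem gsize_shiftAux (c d : ℕ) (t : GTerm) : gsize (shiftAux c d t) = gsize t := by
  induction t generalizing c with
  | var j => simp only [shiftAux]; split <;> rfl
  | app a b iha ihb => simp [shiftAux, gsize, iha, ihb]
  | lam a ih => simp [shiftAux, gsize, ih]
  | gvar a => rfl

theorem gsize_substAux_gvar (i : ℕ) (w : GTerm) (d : ℕ) (t : GTerm) :
    gsize (substAux i (.gvar w) d t) = gsize t := by
  induction t generalizing d with
  | var j => simp only [substAux]; split <;> rfl
  | app a b iha ihb => simp [substAux, gsize, iha, ihb]
  | lam a ih => simp [substAux, gsize, ih]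
  | gvar a => rfl

theorem gsize_msubstAux (σ : List GTerm) (h : ∀ u ∈ σ, ∃ w, u = .gvar w)
    (d : ℕ) (t : GTerm) : gsize (msubstAux σ d t) = gsize t := by
  induction t generalizing d with
  | var j =>
    simp only [msubstAux]
    split
    · rfl
    · rw [gsize_shiftAux]
      rcases Nat.lt_or_ge (j - d) σ.length with hl | hl
      · rw [List.getD_eq_getElem _ _ hl]
        obtain ⟨w, hw⟩ := h _ (List.getElem_mem hl)
        rw [hw]; rfl
      · rw [List.getD_eq_default _ _ hl]; rfl
  | app a b iha ihb => simp [msubstAux, gsize, iha, ihb]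
  | lam a ih => simp [msubstAux, gsize, ih]
  | gvar a => rfl

theorem gsize_msubst (σ : List GTerm) (h : ∀ u ∈ σ, ∃ w, u = .gvar w)
    (t : GTerm) : gsize (msubst σ t) = gsize t :=
  gsize_msubstAux σ h 0 t

/-- The naive globalization procedure. -/
def globalizeNaive : GTerm → GTerm
  | .lam t => .lam (globalizeNaive (subst 0 (.gvar (.lam t)) t))
  | .app t u => .app (globalizeNaive t) (globalizeNaive u)
  | .gvar t => .gvar t
  | .var i => .var i
termination_by t => gsize t
decreasing_by
  · simp only [subst, gsize_substAux_gvar, gsize]; omega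
  · simp only [gsize]; omega
  · simp only [gsize]; omega

/-- The strongly connected component of a closed g-term: positions all of whose
nonempty prefixes index open terms. -/
def SCC (t : GTerm) : Set Pos :=
  {p | p ∈ Valid t ∧ ∀ p' u, p' ≠ [] → p' <+: p → t.index p' = some u → ¬ Closed u}

/-- `duplicates(t)`: strict subterms in the SCC of `t` whose term summary (size)
is not unique within the SCC. -/
def duplicates (t : GTerm) : Set GTerm :=
  {u | ∃ p q v, p ∈ SCC t ∧ q ∈ SCC t ∧ p ≠ [] ∧ q ≠ [] ∧ p ≠ q ∧
      t.index p = some u ∧ t.index q = some v ∧ gsize u = gsize v}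

open Classical in
mutual
/-- Efficient globalization. -/
noncomputable def globalize (r : GTerm) : GTerm :=
  globalizeScc r [] (by simp) r
termination_by (gsize r, 2)
decreasing_by
  apply Prod.Lex.right; omega

noncomputable def globalizeScc (r : GTerm) (σ : List GTerm)
    (h : ∀ u ∈ σ, ∃ w, u = GTerm.gvar w) : GTerm → GTerm
  | .lam t => .lam (globalizeStep r (.gvar (.app r t) :: σ)
      (by
        intro u hu
        rcases List.mem_cons.mp hu with h' | h'
        · exact ⟨_, h'⟩
        · exact h u h') t)
  | .app t u => .app (globalizeStep r σ h t) (globalizeStep r σ h u)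
  | .gvar t => .gvar t
  | .var i => msubst σ (.var i)
termination_by t => (gsize t, 1)
decreasing_by
  · apply Prod.Lex.left; simp only [gsize]; omega
  · apply Prod.Lex.left; simp only [gsize]; omega
  · apply Prod.Lex.left; simp only [gsize]; omega

noncomputable def globalizeStep (r : GTerm) (σ : List GTerm)
    (h : ∀ u ∈ σ, ∃ w, u = GTerm.gvar w) (t : GTerm) : GTerm :=
  if Closed t ∨ t ∈ duplicates r then globalize (msubst σ t)
  else globalizeScc r σ h t
termination_by (gsize t, 3)
decreasing_by
  · rw [gsize_msubst σ h]; apply Prod.Lex.right; omega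
  · apply Prod.Lex.right; omega
end

theorem GTerm.index_append (t : GTerm) (a b : Pos) :
    t.index (a ++ b) = (t.index a).bind (·.index b) := by
  induction a generalizing t with
  | nil => simp [GTerm.index]
  | cons x a ih => cases t <;> cases x <;> simp [GTerm.index, ih]

theorem GTerm.index_append_of_index_eq {t v : GTerm} {a : Pos} (h : t.index a = some v)
    (b : Pos) : t.index (a ++ b) = v.index b := by
  rw [t.index_append, h, Option.bind_some]

theorem index_append_child {t v w : GTerm} {a r : Pos} {x : Dir}
    (h : t.index (a ++ r) = some v) (hx : v.index [x] = some w := by simp [GTerm.index]) :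
    t.index (a ++ (r ++ [x])) = some w := by
  rw [← List.append_assoc, t.index_append_of_index_eq h, hx]

theorem GTerm.IsPure.of_index_eq {t v : GTerm} (ht : t.IsPure) {p : Pos}
    (h : t.index p = some v) : v.IsPure := by
  induction p generalizing t with
  | nil =>
    simp only [GTerm.index, Option.some_inj] at h
    exact h ▸ ht
  | cons x p ih =>
    cases t <;> cases x <;> simp only [GTerm.index, reduceCtorEq] at h <;>
      simp only [GTerm.IsPure] at ht
    · exact ih ht.1 h
    · exact ih ht.2 h
    · exact ih ht h

theorem length_lt_gsize_of_mem_valid {t : GTerm} {p : Pos} (h : p ∈ Valid t) :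
    p.length < gsize t := by
  induction p generalizing t with
  | nil => cases t <;> simp [gsize]
  | cons x p ih =>
    cases t <;> cases x <;> simp [Valid, GTerm.index] at h
    all_goals have := ih h; simp only [gsize, List.length_cons]; omega

theorem mem_valid_of_index_eq {t v : GTerm} {p : Pos} (h : t.index p = some v) :
    p ∈ Valid t := by
  simp [Valid, h]

theorem exists_index_eq_of_mem_valid {t : GTerm} {p : Pos} (h : p ∈ Valid t) :
    ∃ v, t.index p = some v :=
  Option.isSome_iff_exists.mp h

theorem mem_valid_of_prefix {t : GTerm} {a b : Pos} (hab : a <+: b) (hb : b ∈ Valid t) :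
    a ∈ Valid t := by
  obtain ⟨c, rfl⟩ := hab
  cases ha : t.index a <;> simp_all [Valid, t.index_append]

theorem mem_valid_append_singleton_iff {t v : GTerm} {a : Pos} (h : t.index a = some v)
    (x : Dir) : a ++ [x] ∈ Valid t ↔ (v.index [x]).isSome := by
  simp [Valid, t.index_append_of_index_eq h]

theorem lamDepth_append (a b : Pos) : lamDepth (a ++ b) = lamDepth a + lamDepth b := by
  simp [lamDepth]

theorem lamDepth_cons (x : Dir) (l : Pos) :
    lamDepth (x :: l) = lamDepth l + if x = .down then 1 else 0 := by
  simp [lamDepth, List.count_cons]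

theorem exists_eq_append_down_cons_of_lt_lamDepth {k : ℕ} {l : Pos} (h : k < lamDepth l) :
    ∃ l₁ l₂, l = l₁ ++ .down :: l₂ ∧ lamDepth l₂ = k := by
  induction l with
  | nil => simp [lamDepth] at h
  | cons x l ih =>
    by_cases hk : k < lamDepth l
    · obtain ⟨l₁, l₂, rfl, hl₂⟩ := ih hk
      exact ⟨x :: l₁, l₂, rfl, hl₂⟩
    · have hx : x = .down := by
        by_contra hx
        rw [lamDepth_cons, if_neg hx] at h
        omega
      rw [lamDepth_cons, if_pos hx] at h
      exact ⟨[], l, by simp [hx], by omega⟩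

theorem Closed.lt_lamDepth {t : GTerm} (hc : Closed t) {p : Pos} {i : ℕ}
    (h : t.index p = some (.var i)) : i < lamDepth p := by
  by_contra hle
  have hfree : p ∈ Free t := ⟨i, h, by omega⟩
  rw [Closed] at hc
  simp [hc] at hfree

theorem LocallyClosed.add_lamDepth_le {u : GTerm} {q r : Pos} (hlc : LocallyClosed u q)
    {i : ℕ} (h : u.index (q ++ r) = some (.var i)) (hi : lamDepth r ≤ i) :
    lamDepth q + lamDepth r ≤ i := by
  obtain ⟨w, hw⟩ := exists_index_eq_of_mem_valid hlc.1
  rw [u.index_append_of_index_eq hw] at h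
  obtain ⟨j, hj, hle⟩ := hlc.2 w hw r ⟨i, h, hi⟩
  rw [u.index_append_of_index_eq hw, h, Option.some_inj, GTerm.var.injEq] at hj
  rw [← lamDepth_append]
  exact hj ▸ hle

theorem index_declift (d₀ : ℕ) (w : GTerm) (r : Pos) (d : ℕ) :
    (declift d₀ w d).index r = (w.index r).map (declift d₀ · (d + lamDepth r)) := by
  induction r generalizing w d with
  | nil => simp [GTerm.index, lamDepth]
  | cons x r ih =>
    cases w with
    | var j => simp only [declift]; split <;> cases x <;> simp [GTerm.index]
    | app a b => cases x <;> simp [declift, GTerm.index, ih, lamDepth_cons]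
    | lam a =>
      cases x <;> simp [declift, GTerm.index, ih, lamDepth_cons, Nat.add_assoc, Nat.add_comm 1]
    | gvar a => cases x <;> simp [declift, GTerm.index]

theorem liftAt_bind_index (u : GTerm) (q r : Pos) :
    (liftAt u q).bind (·.index r) =
      (u.index (q ++ r)).map (declift (lamDepth q) · (lamDepth r)) := by
  rw [liftAt, u.index_append]
  cases u.index q <;> simp [index_declift]

/-- The variable at `a` is bound by the λ at `c`: this is the ↑-transition from `a` to `c`. -/
def BoundAt (t : GTerm) (a c : Pos) : Prop :=
  ∃ s, a = c ++ .down :: s ∧ t.index a = some (.var (lamDepth s))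

theorem trans_up_iff {t : GTerm} {a : Pos} {n : GTerm × Pos} :
    Trans (t, a) .up n ↔ ∃ c, BoundAt t a c ∧ n = (t, c) := by
  constructor
  · intro h
    generalize hl : Lab.up = l at h
    generalize hm : (t, a) = m at h
    cases h with
    | dir _ _ x _ => cases x <;> cases hl
    | up _ c s hi =>
      cases hm
      exact ⟨c, ⟨s, rfl, hi⟩, rfl⟩
  · rintro ⟨c, ⟨s, rfl, hi⟩, rfl⟩
    exact .up t c s hi

theorem trans_ofDir_iff {t : GTerm} {a : Pos} {x : Dir} {n : GTerm × Pos} :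
    Trans (t, a) (Lab.ofDir x) n ↔ a ++ [x] ∈ Valid t ∧ n = (t, a ++ [x]) := by
  constructor
  · intro h
    generalize hl : Lab.ofDir x = l at h
    cases h with
    | dir _ _ y hv => cases x <;> cases y <;> cases hl <;> exact ⟨hv, rfl⟩
    | up => cases x <;> cases hl
  · rintro ⟨hv, rfl⟩
    exact .dir t a x hv

namespace Bisim

theorem refl (n : GTerm × Pos) : Bisim n n :=
  ⟨Eq, fun _ _ h _ => h ▸ ⟨fun m hm => ⟨m, hm, rfl⟩, fun m hm => ⟨m, hm, rfl⟩⟩,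
    rfl⟩

theorem symm {n m : GTerm × Pos} (h : Bisim n m) : Bisim m n := by
  obtain ⟨R, hR, hnm⟩ := h
  exact ⟨flip R, fun a b hab x => ⟨(hR b a hab x).2, (hR b a hab x).1⟩, hnm⟩

theorem trans {n m k : GTerm × Pos} (h₁ : Bisim n m) (h₂ : Bisim m k) : Bisim n k := by
  obtain ⟨R, hR, hnm⟩ := h₁
  obtain ⟨S, hS, hmk⟩ := h₂
  refine ⟨Relation.Comp R S, ?_, m, hnm, hmk⟩
  rintro a c ⟨b, hab, hbc⟩ x
  constructor
  · intro a' ha'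
    obtain ⟨b', hb', hab'⟩ := (hR a b hab x).1 a' ha'
    obtain ⟨c', hc', hbc'⟩ := (hS b c hbc x).1 b' hb'
    exact ⟨c', hc', b', hab', hbc'⟩
  · intro c' hc'
    obtain ⟨b', hb', hbc'⟩ := (hS b c hbc x).2 c' hc'
    obtain ⟨a', ha', hab'⟩ := (hR a b hab x).2 b' hb'
    exact ⟨a', ha', b', hab', hbc'⟩

theorem exists_trans {n₁ n₂ n₁' : GTerm × Pos} {x : Lab} (h : Bisim n₁ n₂)
    (ht : Trans n₁ x n₁') : ∃ n₂', Trans n₂ x n₂' ∧ Bisim n₁' n₂' := by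
  obtain ⟨R, hR, hn⟩ := h
  obtain ⟨n₂', ht₂, hn'⟩ := (hR n₁ n₂ hn x).1 n₁' ht
  exact ⟨n₂', ht₂, R, hR, hn'⟩

theorem mem_valid_append_singleton {t₁ t₂ : GTerm} {a b : Pos} {x : Dir}
    (h : Bisim (t₁, a) (t₂, b)) (ha : a ++ [x] ∈ Valid t₁) : b ++ [x] ∈ Valid t₂ := by
  obtain ⟨n, hn, -⟩ := h.exists_trans (trans_ofDir_iff.mpr ⟨ha, rfl⟩)
  exact (trans_ofDir_iff.mp hn).1

theorem append {t₁ t₂ : GTerm} {a b : Pos} (h : Bisim (t₁, a) (t₂, b)) (s : Pos)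
    (ha : a ++ s ∈ Valid t₁) (hb : b ∈ Valid t₂) :
    b ++ s ∈ Valid t₂ ∧ Bisim (t₁, a ++ s) (t₂, b ++ s) := by
  induction s generalizing a b with
  | nil => simpa using ⟨hb, h⟩
  | cons x s ih =>
    have hax : a ++ [x] ∈ Valid t₁ := mem_valid_of_prefix ⟨s, by simp⟩ ha
    obtain ⟨n, hn, h'⟩ := h.exists_trans (trans_ofDir_iff.mpr ⟨hax, rfl⟩)
    obtain ⟨hbx, rfl⟩ := trans_ofDir_iff.mp hn
    simpa using ih h' (by simpa using ha) hbx

theorem append_of_mem_valid {t₁ t₂ : GTerm} {a b s : Pos} (h : Bisim (t₁, a) (t₂, b))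
    (ha : a ++ s ∈ Valid t₁) (hb : b ++ s ∈ Valid t₂) :
    Bisim (t₁, a ++ s) (t₂, b ++ s) :=
  (h.append s ha (mem_valid_of_prefix ⟨s, rfl⟩ hb)).2

theorem exists_eq_app {t v : GTerm} {a b : Pos} {x y : GTerm} (h : Bisim (t, a) (t, b))
    (ha : t.index a = some (.app x y)) (hb : t.index b = some v) : ∃ x' y', v = .app x' y' := by
  have hleft := h.mem_valid_append_singleton
    ((mem_valid_append_singleton_iff ha .left).2 (by simp [GTerm.index]))
  rw [mem_valid_append_singleton_iff hb] at hleft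
  cases v <;> simp [GTerm.index] at hleft ⊢

theorem exists_eq_lam {t v : GTerm} {a b : Pos} {x : GTerm} (h : Bisim (t, a) (t, b))
    (ha : t.index a = some (.lam x)) (hb : t.index b = some v) : ∃ x', v = .lam x' := by
  have hdown := h.mem_valid_append_singleton
    ((mem_valid_append_singleton_iff ha .down).2 (by simp [GTerm.index]))
  rw [mem_valid_append_singleton_iff hb] at hdown
  cases v <;> simp [GTerm.index] at hdown ⊢

/-- Bisimilarity from `a` to `a ++ c` repeats `c` indefinitely below `a`, which a finite term
cannot accommodate unless `c = []`. -/
theorem eq_of_prefix {t : GTerm} {a b : Pos} (hab : a <+: b) (hb : b ∈ Valid t)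
    (h : Bisim (t, a) (t, b)) : a = b := by
  obtain ⟨c, rfl⟩ := hab
  by_contra hne
  have hc : 0 < c.length := List.length_pos_iff.mpr (by simpa using hne)
  have grow : ∀ n : ℕ, ∃ z : Pos,
      n < z.length ∧ a ++ z ∈ Valid t ∧ Bisim (t, a) (t, a ++ z) := by
    intro n
    induction n with
    | zero => exact ⟨c, hc, hb, h⟩
    | succ n ih =>
      obtain ⟨z, hn, hz, hbz⟩ := ih
      obtain ⟨hzz, hbzz⟩ := hbz.append z hz hz
      refine ⟨z ++ z, by simp only [List.length_append]; omega, by simpa using hzz,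
        hbz.trans (by simpa using hbzz)⟩
  obtain ⟨z, hn, hz, -⟩ := grow (gsize t)
  have := length_lt_gsize_of_mem_valid hz
  simp only [List.length_append] at this
  omega

theorem eq_of_prefix_of_prefix {t : GTerm} {a b g : Pos} (ha : a <+: g) (hb : b <+: g)
    (hg : g ∈ Valid t) (h : Bisim (t, a) (t, b)) : a = b := by
  rcases List.prefix_or_prefix_of_prefix ha hb with hab | hba
  · exact h.eq_of_prefix hab (mem_valid_of_prefix hb hg)
  · exact (h.symm.eq_of_prefix hba (mem_valid_of_prefix ha hg)).symm

theorem boundAt {t : GTerm} {a b c₁ c₂ : Pos} (h : Bisim (t, a) (t, b))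
    (ha : BoundAt t a c₁) (hc : Bisim (t, c₁) (t, c₂)) (hc₂ : c₂ <+: b)
    (hb : b ∈ Valid t) : BoundAt t b c₂ := by
  obtain ⟨n, hn, h'⟩ := h.exists_trans (trans_up_iff.mpr ⟨c₁, ha, rfl⟩)
  obtain ⟨c, hbc, rfl⟩ := trans_up_iff.mp hn
  have hcb : c <+: b := by
    obtain ⟨s, hs, -⟩ := hbc
    exact ⟨_, hs.symm⟩
  obtain rfl := (hc.symm.trans h').eq_of_prefix_of_prefix hc₂ hcb hb
  exact hbc

end Bisim

section LiftEq

variable {t u : GTerm} {p q₁ q₂ : Pos}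

theorem declift_var_eq_of_bisim (hcl : Closed t) (hp : t.index p = some u)
    (hlc : LocallyClosed u q₁) (hb : Bisim (t, p ++ q₁) (t, p ++ q₂)) {i : ℕ} {v₂ : GTerm}
    {r : Pos} (h₁ : t.index (p ++ q₁ ++ r) = some (.var i))
    (h₂ : t.index (p ++ q₂ ++ r) = some v₂) :
    declift (lamDepth q₁) (.var i) (lamDepth r) = declift (lamDepth q₂) v₂ (lamDepth r) := by
  have hv₁ := mem_valid_of_index_eq h₁
  have hv₂ := mem_valid_of_index_eq h₂
  have hbr := hb.append_of_mem_valid hv₁ hv₂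
  rcases lt_or_ge i (lamDepth r) with hi | hi
  · -- the variable is bound inside `r`, at the same place on both sides
    obtain ⟨r', r'', rfl, rfl⟩ := exists_eq_append_down_cons_of_lt_lamDepth hi
    have hbinder : Bisim (t, p ++ q₁ ++ r') (t, p ++ q₂ ++ r') := hb.append_of_mem_valid
      (mem_valid_of_prefix ⟨.down :: r'', by simp⟩ hv₁)
      (mem_valid_of_prefix ⟨.down :: r'', by simp⟩ hv₂)
    obtain ⟨s, hs, hidx⟩ :=
      hbr.boundAt ⟨r'', by simp, h₁⟩ hbinder ⟨.down :: r'', by simp⟩ hv₂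
    obtain rfl : r'' = s := by simpa using hs
    obtain rfl : v₂ = .var (lamDepth r'') := Option.some_inj.mp (h₂.symm.trans hidx)
    simp only [declift, if_neg (not_le.mpr hi)]
  · -- local closedness puts the binder strictly above `p`, common to both sides
    have hq₁ : lamDepth q₁ + lamDepth r ≤ i :=
      hlc.add_lamDepth_le (by rwa [List.append_assoc, t.index_append_of_index_eq hp] at h₁) hi
    have hlt := hcl.lt_lamDepth h₁
    rw [lamDepth_append, lamDepth_append] at hlt
    obtain ⟨p', p'', rfl, hp''⟩ := exists_eq_append_down_cons_of_lt_lamDepth (l := p)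
      (k := i - lamDepth q₁ - lamDepth r) (by omega)
    have hbound : BoundAt t (p' ++ .down :: p'' ++ q₁ ++ r) p' :=
      ⟨p'' ++ q₁ ++ r, by simp, by rw [h₁, lamDepth_append, lamDepth_append]; congr; omega⟩
    obtain ⟨s, hs, hidx⟩ :=
      hbr.boundAt hbound (Bisim.refl _) ⟨.down :: p'' ++ q₂ ++ r, by simp⟩ hv₂
    obtain rfl : p'' ++ q₂ ++ r = s := by simpa using hs
    obtain rfl : v₂ = .var (lamDepth (p'' ++ q₂ ++ r)) :=
      Option.some_inj.mp (h₂.symm.trans hidx)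
    simp only [declift, lamDepth_append]
    rw [if_pos hi, if_pos (by omega)]
    congr 1
    omega

theorem declift_eq_of_bisim (ht : t.IsPure) (hcl : Closed t) (hp : t.index p = some u)
    (hlc : LocallyClosed u q₁) (hb : Bisim (t, p ++ q₁) (t, p ++ q₂)) {v₁ v₂ : GTerm}
    {r : Pos} (h₁ : t.index (p ++ q₁ ++ r) = some v₁)
    (h₂ : t.index (p ++ q₂ ++ r) = some v₂) :
    declift (lamDepth q₁) v₁ (lamDepth r) = declift (lamDepth q₂) v₂ (lamDepth r) := by
  induction v₁ generalizing r v₂ with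
  | var i => exact declift_var_eq_of_bisim hcl hp hlc hb h₁ h₂
  | gvar a => exact absurd (ht.of_index_eq h₁) (by simp [GTerm.IsPure])
  | app a b iha ihb =>
    have hbr := hb.append_of_mem_valid (mem_valid_of_index_eq h₁) (mem_valid_of_index_eq h₂)
    obtain ⟨a', b', rfl⟩ := hbr.exists_eq_app h₁ h₂
    have hleft := iha (r := r ++ [.left]) (v₂ := a')
      (index_append_child h₁) (index_append_child h₂)
    have hright := ihb (r := r ++ [.right]) (v₂ := b')
      (index_append_child h₁) (index_append_child h₂)
    simpa [declift, lamDepth] using And.intro hleft hright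
  | lam a ih =>
    have hbr := hb.append_of_mem_valid (mem_valid_of_index_eq h₁) (mem_valid_of_index_eq h₂)
    obtain ⟨a', rfl⟩ := hbr.exists_eq_lam h₁ h₂
    have hbody := ih (r := r ++ [.down]) (v₂ := a')
      (index_append_child h₁) (index_append_child h₂)
    simpa [declift, lamDepth] using hbody

end LiftEq

/-- bisimilar nodes over a locally closed common context have
equal lifts at every common extension. -/
theorem bisim_locallyClosed_lift_eq (t : GTerm) (ht : t.IsPure)
    (p q₁ q₂ r : Pos)
    (n₁ : IsNode t (p ++ q₁ ++ r)) (n₂ : IsNode t (p ++ q₂ ++ r))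
    (hb : Bisim (t, p ++ q₁) (t, p ++ q₂))
    (u : GTerm) (hp : t.index p = some u) (hlc : LocallyClosed u q₁) :
    ((liftAt u q₁).bind fun v => v.index r) =
      ((liftAt u q₂).bind fun v => v.index r) := by
  obtain ⟨hcl, hv₁⟩ := n₁
  obtain ⟨v₁, h₁⟩ := exists_index_eq_of_mem_valid hv₁
  obtain ⟨v₂, h₂⟩ := exists_index_eq_of_mem_valid n₂.2
  rw [liftAt_bind_index, liftAt_bind_index, ← t.index_append_of_index_eq hp,
    ← t.index_append_of_index_eq hp, ← List.append_assoc, ← List.append_assoc, h₁, h₂]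
  exact congrArg some (declift_eq_of_bisim ht hcl hp hlc hb h₁ h₂)

end HashAlpha
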